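/- Let 0 < c < 1 be a real constant. For all sufficiently large n there exists a graph G with n vertices such that every edge of G is contained in a triangle, e(G) > n²/4 − n^c · n, and bk(G) < n^{1−c/2}/(2√2); that is, γ(n, n^c) < n^{1−c/2}/(2√2). -/

import Mathlib

open Finset
open scoped Classical

/-- The booksize of `G`: the maximum over edges `uv` of `G` of the number of
common neighbors of `u` and `v` (`0` if `G` has no edges). -/
noncomputable def bk {V : Type*} [Fintype V] (G : SimpleGraph V) : ℕ :=
  (Finset.univ.filter fun p : V × V => G.Adj p.1 p.2).sup
    fun p => (G.neighborSet p.1 ∩ G.neighborSet p.2).ncard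

/-- The number of `s`-cliques of `G`. -/
noncomputable def cliqueCount {V : Type*} [Fintype V] (G : SimpleGraph V) (s : ℕ) : ℕ :=
  (G.cliqueFinset s).card

/-- The number of induced subgraphs of `G` isomorphic to `H`. -/
noncomputable def inducedCopies {V W : Type*} [Fintype V] (G : SimpleGraph V)
    (H : SimpleGraph W) : ℕ :=
  {s : Set V | Nonempty (G.induce s ≃g H)}.ncard

/-- `K4j j` is the graph `K₄^(j)`: a triangle on `{0,1,2}` together with the vertex `3`
joined to precisely `3 - j` of its vertices. -/
def K4j (j : ℕ) : SimpleGraph (Fin 4) :=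
  SimpleGraph.fromRel fun a b => (a.val < 3 ∧ b.val < 3) ∨ (a.val = 3 ∧ b.val < 3 - j)

/-- The codegree function `d̂`, as a function on unordered pairs. -/
noncomputable def codegSym {V : Type*} [Fintype V] (G : SimpleGraph V) : Sym2 V → ℕ :=
  Sym2.lift ⟨fun u v => (G.neighborSet u ∩ G.neighborSet v).ncard,
    fun u v => by simp [Set.inter_comm]⟩

/-- `|Γ'(u) ∩ Γ'(v)|`, where `Γ'(x) = V ∖ Γ(x)`, as a function on unordered pairs. -/
noncomputable def noncodegSym {V : Type*} [Fintype V] (G : SimpleGraph V) : Sym2 V → ℕ :=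
  Sym2.lift ⟨fun u v => ((G.neighborSet u)ᶜ ∩ (G.neighborSet v)ᶜ).ncard,
    fun u v => by simp [Set.inter_comm]⟩

/-! The graph: two classes `X`, `Y` of size `m` joined completely, and `p²` vertices `z_{ij}`,
where `z_{ij}` is joined to the `i`-th of `p` windows of length `k` spread evenly over `X` and to
the `j`-th such window over `Y`. The windows cover `X` and `Y`, and windows three or more steps
apart are disjoint, so every edge lies in a triangle, an edge `xy` lies in at most `3 · 3` triangles, and an
edge at `z_{ij}` in exactly `k`. With `k < K = n^{1-c/2} / (2√2) ≤ k + 1`, `p` the root of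
`p² + 2kp = n` rounded up and `2m + p² ≈ n`, the graph misses at most
`n³ / (8K²) - n = n^{1+c} - n` of the `n² / 4` edges. -/

open SimpleGraph

theorem bk_le_iff {V : Type*} [Fintype V] {G : SimpleGraph V} {t : ℕ} :
    bk G ≤ t ↔ ∀ u v, G.Adj u v → (G.neighborSet u ∩ G.neighborSet v).ncard ≤ t := by
  simp [bk, Finset.sup_le_iff]

theorem ncard_inter_neighborSet_le_bk {V : Type*} [Fintype V] {G : SimpleGraph V} {u v : V}
    (h : G.Adj u v) : (G.neighborSet u ∩ G.neighborSet v).ncard ≤ bk G :=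
  bk_le_iff.1 le_rfl u v h

theorem bk_comap_le {V W : Type*} [Fintype V] [Fintype W] (e : V ≃ W) (G : SimpleGraph W) :
    bk (G.comap e) ≤ bk G :=
  bk_le_iff.2 fun u v h => by
    have : (G.comap e).neighborSet u ∩ (G.comap e).neighborSet v
        = e ⁻¹' (G.neighborSet (e u) ∩ G.neighborSet (e v)) := rfl
    rw [this, Set.ncard_preimage_of_injective_subset_range e.injective (by simp)]
    exact ncard_inter_neighborSet_le_bk h

section Connector

variable {X Y Z W : Type*} (A : Z → Finset X) (B : Z → Finset Y)

def connectorGraph : SimpleGraph (X ⊕ Y ⊕ Z ⊕ W) where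
  Adj u v := match u, v with
    | .inl _, .inr (.inl _) | .inr (.inl _), .inl _ => True
    | .inl x, .inr (.inr (.inl z)) | .inr (.inr (.inl z)), .inl x => x ∈ A z
    | .inr (.inl y), .inr (.inr (.inl z)) | .inr (.inr (.inl z)), .inr (.inl y) => y ∈ B z
    | _, _ => False
  symm := ⟨by rintro (_ | _ | _ | _) (_ | _ | _ | _) h <;> simp_all⟩
  loopless := ⟨by rintro (_ | _ | _ | _) h <;> simp_all⟩

variable {A B}

theorem connectorGraph_exists_common_neighbor (hcover : ∀ x y, ∃ z, x ∈ A z ∧ y ∈ B z)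
    (hA : ∀ z, (A z).Nonempty) (hB : ∀ z, (B z).Nonempty) {u v : X ⊕ Y ⊕ Z ⊕ W}
    (h : (connectorGraph A B).Adj u v) :
    ∃ w, (connectorGraph A B).Adj u w ∧ (connectorGraph A B).Adj v w := by
  rcases u with x | y | z | _ <;> rcases v with x' | y' | z' | _ <;>
    simp only [connectorGraph] at h
  · obtain ⟨z, hx, hy⟩ := hcover x y'
    exact ⟨.inr (.inr (.inl z)), by simp [connectorGraph, hx, hy]⟩
  · obtain ⟨y, hy⟩ := hB z'
    exact ⟨.inr (.inl y), by simp [connectorGraph, hy]⟩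
  · obtain ⟨z, hx, hy⟩ := hcover x' y
    exact ⟨.inr (.inr (.inl z)), by simp [connectorGraph, hx, hy]⟩
  · obtain ⟨x, hx⟩ := hA z'
    exact ⟨.inl x, by simp [connectorGraph, hx]⟩
  · obtain ⟨y, hy⟩ := hB z
    exact ⟨.inr (.inl y), by simp [connectorGraph, hy]⟩
  · obtain ⟨x, hx⟩ := hA z
    exact ⟨.inl x, by simp [connectorGraph, hx]⟩

theorem connectorGraph_inter_neighborSet_inl_inr_inl (x : X) (y : Y) :
    (connectorGraph A B (W := W)).neighborSet (.inl x) ∩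
        (connectorGraph A B).neighborSet (.inr (.inl y)) =
      (fun z => .inr (.inr (.inl z))) '' {z | x ∈ A z ∧ y ∈ B z} := by
  ext (_ | _ | _ | _) <;> simp [connectorGraph]

theorem connectorGraph_inter_neighborSet_inl_inr_inr_inl (x : X) (z : Z) :
    (connectorGraph A B (W := W)).neighborSet (.inl x) ∩
        (connectorGraph A B).neighborSet (.inr (.inr (.inl z))) =
      (fun y => .inr (.inl y)) '' (B z : Set Y) := by
  ext (_ | _ | _ | _) <;> simp [connectorGraph]

theorem connectorGraph_inter_neighborSet_inr_inl_inr_inr_inl (y : Y) (z : Z) :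
    (connectorGraph A B (W := W)).neighborSet (.inr (.inl y)) ∩
        (connectorGraph A B).neighborSet (.inr (.inr (.inl z))) =
      .inl '' (A z : Set X) := by
  ext (_ | _ | _ | _) <;> simp [connectorGraph]

theorem bk_connectorGraph_le [Fintype X] [Fintype Y] [Fintype Z] [Fintype W] {t : ℕ}
    (hXY : ∀ x y, #{z | x ∈ A z ∧ y ∈ B z} ≤ t) (hA : ∀ z, #(A z) ≤ t)
    (hB : ∀ z, #(B z) ≤ t) : bk (connectorGraph A B (W := W)) ≤ t := by
  have hXY' : ∀ x y, ((connectorGraph A B (W := W)).neighborSet (.inl x) ∩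
      (connectorGraph A B).neighborSet (.inr (.inl y))).ncard ≤ t := fun x y => by
    rw [connectorGraph_inter_neighborSet_inl_inr_inl,
      Set.ncard_image_of_injective _ (by intro _ _; simp)]
    simpa [← Set.ncard_coe_finset] using hXY x y
  have hXZ : ∀ x z, ((connectorGraph A B (W := W)).neighborSet (.inl x) ∩
      (connectorGraph A B).neighborSet (.inr (.inr (.inl z)))).ncard ≤ t := fun x z => by
    rw [connectorGraph_inter_neighborSet_inl_inr_inr_inl,
      Set.ncard_image_of_injective _ (by intro _ _; simp), Set.ncard_coe_finset]
    exact hB z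
  have hYZ : ∀ y z, ((connectorGraph A B (W := W)).neighborSet (.inr (.inl y)) ∩
      (connectorGraph A B).neighborSet (.inr (.inr (.inl z)))).ncard ≤ t := fun y z => by
    rw [connectorGraph_inter_neighborSet_inr_inl_inr_inr_inl,
      Set.ncard_image_of_injective _ Sum.inl_injective, Set.ncard_coe_finset]
    exact hA z
  rw [bk_le_iff]
  rintro (x | y | z | _) (x' | y' | z' | _) h <;> simp only [connectorGraph] at h
  · exact hXY' x y'
  · exact hXZ x z'
  · exact Set.inter_comm _ _ ▸ hXY' x' y
  · exact hYZ y z'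
  · exact Set.inter_comm _ _ ▸ hXZ x' z
  · exact Set.inter_comm _ _ ▸ hYZ y' z

theorem card_le_card_edgeFinset_connectorGraph [Fintype X] [Fintype Y] [Fintype Z] [Fintype W] :
    Fintype.card X * Fintype.card Y + ∑ z, (#(A z) + #(B z)) ≤
      #(connectorGraph A B (W := W)).edgeFinset := by
  let f : (X × Y) ⊕ (Σ _ : Z, X) ⊕ (Σ _ : Z, Y) → Sym2 (X ⊕ Y ⊕ Z ⊕ W)
    | .inl (x, y) => s(.inl x, .inr (.inl y))
    | .inr (.inl ⟨z, x⟩) => s(.inl x, .inr (.inr (.inl z)))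
    | .inr (.inr ⟨z, y⟩) => s(.inr (.inl y), .inr (.inr (.inl z)))
  have hcard : #((univ : Finset (X × Y)).disjSum ((univ.sigma A).disjSum (univ.sigma B))) =
      Fintype.card X * Fintype.card Y + ∑ z, (#(A z) + #(B z)) := by
    simp [card_disjSum, card_sigma, sum_add_distrib]
  rw [← hcard]
  refine card_le_card_of_injOn f ?_ ?_
  · rintro (⟨x, y⟩ | ⟨z, x⟩ | ⟨z, y⟩) h <;>
    simp only [f, mem_coe, SimpleGraph.mem_edgeFinset, SimpleGraph.mem_edgeSet] <;>
    simp_all [connectorGraph]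
  · rintro (⟨_, _⟩ | ⟨_, _⟩ | ⟨_, _⟩) - (⟨_, _⟩ | ⟨_, _⟩ | ⟨_, _⟩) - h <;>
      simp_all [f]

end Connector

-- The `i`-th of `p` windows of length `k` in `[0, m)`, whose starts are spread evenly
-- from `0` to `m - k`.
def blockStart (k p m i : ℕ) : ℕ := i * (m - k) / (p - 1)

def block (k p m i : ℕ) : Finset (Fin m) :=
  {x | blockStart k p m i ≤ x ∧ (x : ℕ) < blockStart k p m i + k}

section Blocks

variable {k p m : ℕ}

theorem blockStart_mono : Monotone (blockStart k p m) := fun _ _ h =>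
  Nat.div_le_div_right (Nat.mul_le_mul_right _ h)

theorem blockStart_le (hp : 2 ≤ p) {i : ℕ} (hi : i < p) : blockStart k p m i ≤ m - k :=
  calc blockStart k p m i ≤ (p - 1) * (m - k) / (p - 1) :=
        Nat.div_le_div_right (Nat.mul_le_mul_right _ (by omega))
    _ = m - k := Nat.mul_div_cancel_left _ (by omega)

theorem blockStart_succ_le (hp : 2 ≤ p) (hmpk : m ≤ p * k) (i : ℕ) :
    blockStart k p m (i + 1) ≤ blockStart k p m i + k := by
  have hstep : m - k ≤ k * (p - 1) := by
    rw [Nat.mul_sub, mul_one, mul_comm]; omega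
  calc blockStart k p m (i + 1) = (i * (m - k) + (m - k)) / (p - 1) := by
        rw [blockStart, add_one_mul]
    _ ≤ (i * (m - k) + k * (p - 1)) / (p - 1) := by gcongr
    _ = blockStart k p m i + k := Nat.add_mul_div_right _ _ (by omega)

theorem blockStart_add_le_add_three (hp : 2 ≤ p) (hmult : k * (p + 2) ≤ 3 * m) (i : ℕ) :
    blockStart k p m i + k ≤ blockStart k p m (i + 3) := by
  have hstep : k * (p - 1) ≤ 3 * (m - k) := by
    rw [Nat.mul_sub, Nat.mul_sub, mul_one]
    have : k * (p + 2) = k * p + 2 * k := by ring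
    omega
  calc blockStart k p m i + k ≤ blockStart k p m i + 3 * (m - k) / (p - 1) := by
        gcongr; exact (Nat.le_div_iff_mul_le (by omega)).2 hstep
    _ ≤ (i * (m - k) + 3 * (m - k)) / (p - 1) := Nat.div_add_div_le_add_div
    _ = blockStart k p m (i + 3) := by rw [blockStart, add_mul]

theorem exists_mem_block (hkm : k ≤ m) (hp : 2 ≤ p) (hmpk : m ≤ p * k) (x : Fin m) :
    ∃ i : Fin p, x ∈ block k p m i := by
  have hlast : (x : ℕ) < blockStart k p m (p - 1) + k := by
    rw [blockStart, Nat.mul_div_cancel_left _ (by omega)]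
    omega
  have hex : ∃ i, (x : ℕ) < blockStart k p m i + k := ⟨_, hlast⟩
  have hle : Nat.find hex ≤ p - 1 := Nat.find_min' hex hlast
  have hstart : blockStart k p m (Nat.find hex) ≤ x := by
    cases h : Nat.find hex with
    | zero => simp [blockStart]
    | succ i =>
      have hprev := Nat.find_min hex (show i < Nat.find hex by omega)
      have := blockStart_succ_le hp hmpk i
      omega
  exact ⟨⟨Nat.find hex, by omega⟩, mem_filter.2 ⟨mem_univ _, hstart, Nat.find_spec hex⟩⟩

theorem lt_add_three_of_mem_block (hp : 2 ≤ p) (hmult : k * (p + 2) ≤ 3 * m) {x : Fin m}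
    {i j : ℕ} (hi : x ∈ block k p m i) (hj : x ∈ block k p m j) : j < i + 3 := by
  by_contra! h
  have := (blockStart_add_le_add_three hp hmult i).trans (blockStart_mono h)
  simp only [block, mem_filter, mem_univ, true_and] at hi hj
  omega

theorem card_block (hkm : k ≤ m) (hp : 2 ≤ p) {i : ℕ} (hi : i < p) :
    #(block k p m i) = k := by
  have hle := blockStart_le (k := k) (m := m) hp hi
  rw [← card_map Fin.valEmbedding]
  convert Nat.card_Ico (blockStart k p m i) (blockStart k p m i + k) using 2
  · ext a
    simp only [block, mem_map, mem_filter, mem_univ, true_and, Fin.valEmbedding_apply, mem_Ico]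
    exact ⟨by rintro ⟨a, ha, rfl⟩; exact ha, fun ha => ⟨⟨a, by omega⟩, ha, rfl⟩⟩
  · omega

theorem card_filter_mem_block_le (hp : 2 ≤ p) (hmult : k * (p + 2) ≤ 3 * m) (x : Fin m) :
    #{i : Fin p | x ∈ block k p m i} ≤ 3 := by
  set S : Finset (Fin p) := {i | x ∈ block k p m i}
  rcases S.eq_empty_or_nonempty with hS | hS
  · simp [hS]
  have hmin := mem_filter.1 (S.min'_mem hS)
  calc #S = #(S.map Fin.valEmbedding) := (card_map _).symm
    _ ≤ #(Ico (S.min' hS : ℕ) (S.min' hS + 3)) := card_le_card fun j hj => by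
        obtain ⟨j, hjS, rfl⟩ := mem_map.1 hj
        exact mem_Ico.2 ⟨S.min'_le j hjS,
          lt_add_three_of_mem_block hp hmult hmin.2 (mem_filter.1 hjS).2⟩
    _ = 3 := by simp

end Blocks

theorem exists_graph_of_blocks {n k p m : ℕ} (hk : 9 ≤ k) (hkm : k ≤ m) (hp : 2 ≤ p)
    (hn : 2 * m + p ^ 2 ≤ n) (hmpk : m ≤ p * k) (hmult : k * (p + 2) ≤ 3 * m) :
    ∃ G : SimpleGraph (Fin n), (∀ u v, G.Adj u v → ∃ w, G.Adj u w ∧ G.Adj v w) ∧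
      m ^ 2 + 2 * k * p ^ 2 ≤ #G.edgeFinset ∧ bk G ≤ k := by
  let H : SimpleGraph (Fin m ⊕ Fin m ⊕ (Fin p × Fin p) ⊕ Fin (n - (2 * m + p ^ 2))) :=
    connectorGraph (fun z => block k p m z.1) (fun z => block k p m z.2)
  have hcard :
      Fintype.card (Fin m ⊕ Fin m ⊕ (Fin p × Fin p) ⊕ Fin (n - (2 * m + p ^ 2))) = n := by
    simp only [Fintype.card_sum, Fintype.card_prod, Fintype.card_fin]
    rw [← sq]; omega
  let e := (Fintype.equivFinOfCardEq hcard).symm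
  have hblock : ∀ i : Fin p, #(block k p m i) = k := fun i => card_block hkm hp i.isLt
  have hnonempty : ∀ i : Fin p, (block k p m i).Nonempty := fun i =>
    card_pos.1 (by rw [hblock]; omega)
  refine ⟨H.comap e, fun u v h => ?_, ?_, ?_⟩
  · obtain ⟨w, hu, hv⟩ := connectorGraph_exists_common_neighbor
      (fun x y => (exists_mem_block hkm hp hmpk x).elim fun i hi =>
        (exists_mem_block hkm hp hmpk y).elim fun j hj => ⟨(i, j), hi, hj⟩)
      (fun z => hnonempty z.1) (fun z => hnonempty z.2) h
    exact ⟨e.symm w, by simpa using hu, by simpa using hv⟩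
  · calc m ^ 2 + 2 * k * p ^ 2 = Fintype.card (Fin m) * Fintype.card (Fin m) +
          ∑ z : Fin p × Fin p, (#(block k p m z.1) + #(block k p m z.2)) := by
          simp [hblock]; ring
      _ ≤ #H.edgeFinset := card_le_card_edgeFinset_connectorGraph
      _ = #(H.comap e).edgeFinset := (Iso.comap e H).card_edgeFinset_eq.symm
  · refine (bk_comap_le e H).trans
      (bk_connectorGraph_le (fun x y => ?_) (fun z => (hblock _).le) (fun z => (hblock _).le))
    calc _ ≤ #(({i : Fin p | x ∈ block k p m i} : Finset _) ×ˢ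
            ({j : Fin p | y ∈ block k p m j} : Finset _)) :=
          card_le_card fun z hz => by simpa using hz
      _ ≤ 3 * 3 := by
          rw [card_product]
          exact Nat.mul_le_mul (card_filter_mem_block_le hp hmult x)
            (card_filter_mem_block_le hp hmult y)
      _ ≤ k := hk

theorem deficiency_poly_le {k D : ℝ} (hk : 41 ≤ k) (hD0 : 0 ≤ D) (hDk : 2 * D ≤ k)
    (hD : 16 ≤ D) :
    8 * (k + 1) ^ 2 *
        ((1 + D) ^ 2 * ((D ^ 2 + 2 * k * D) / 2 - 2 * k) + 3 * (D ^ 2 + 2 * k * D) / 2)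
      ≤ (D ^ 2 + 2 * k * D) ^ 3 := by
  have hk0 : (0 : ℝ) < k := by linarith
  have h1 : 128 * k ^ 2 * D ^ 3 ≤ 8 * k ^ 2 * D ^ 4 := by
    nlinarith [mul_nonneg (mul_nonneg (sq_nonneg k) (pow_nonneg hD0 3)) (sub_nonneg.2 hD)]
  have h2 : 8 * k * D ^ 4 ≤ 4 * k ^ 2 * D ^ 3 := by
    nlinarith [mul_nonneg (mul_nonneg hk0.le (pow_nonneg hD0 3)) (sub_nonneg.2 hDk)]
  have h3 : 24 * k * D ^ 3 ≤ k ^ 2 * D ^ 3 := by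
    nlinarith [mul_nonneg (mul_nonneg hk0.le (pow_nonneg hD0 3))
      (by linarith : (0 : ℝ) ≤ k - 24)]
  have h4 : 4 * D ^ 4 ≤ k ^ 2 * D ^ 3 := by
    nlinarith [mul_nonneg (mul_nonneg hD0 (pow_nonneg hD0 3)) (sub_nonneg.2 hDk),
      mul_nonneg (mul_nonneg hk0.le (pow_nonneg hD0 3)) (by linarith : (0 : ℝ) ≤ k - 2)]
  have h5 : 8 * D ^ 3 ≤ k ^ 2 * D ^ 3 := by
    nlinarith [mul_nonneg (pow_nonneg hD0 3) (by nlinarith : (0 : ℝ) ≤ k ^ 2 - 8)]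
  have h6 : 16 * k ^ 2 * D ^ 2 + 32 * k * D ^ 2 + 16 * D ^ 2 ≤ 4 * k ^ 2 * D ^ 3 := by
    have : 16 * k ^ 2 * D ^ 2 + 32 * k * D ^ 2 + 16 * D ^ 2 ≤ 64 * k ^ 2 * D ^ 2 := by
      nlinarith [mul_nonneg (sq_nonneg D) (by nlinarith : (0 : ℝ) ≤ k ^ 2 - k),
        mul_nonneg (sq_nonneg D) (by nlinarith : (0 : ℝ) ≤ k ^ 2 - 1)]
    nlinarith [mul_nonneg (mul_nonneg (sq_nonneg k) (sq_nonneg D)) (sub_nonneg.2 hD)]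
  nlinarith [h1, h2, h3, h4, h5, h6, pow_nonneg hD0 6, mul_nonneg hk0.le (pow_nonneg hD0 5),
    pow_nonneg hk0.le 3, sq_nonneg k, hk0.le]

theorem deficiency_le {n k K p m D : ℝ} (hk : 41 ≤ k) (hkK : k ≤ K) (hKk : K ≤ k + 1)
    (hnk : n ≤ k ^ 2) (h40 : 40 * k ≤ n) (hD0 : 0 ≤ D) (hD : D ^ 2 + 2 * k * D = n)
    (hp0 : 0 ≤ p) (hpD : p ≤ 1 + D) (hm1 : n - p ^ 2 - 1 ≤ 2 * m) (hm2 : 2 * m ≤ n) :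
    n ^ 2 / 4 - (m ^ 2 + 2 * k * p ^ 2) ≤ n ^ 3 / (8 * K ^ 2) - n := by
  have hDk : 2 * D ≤ k := by nlinarith
  have hD16 : 16 ≤ D := by nlinarith [mul_nonneg hD0 (sub_nonneg.2 hDk)]
  have hK0 : 0 < K := by linarith
  have hrest : 0 ≤ (1 + D) ^ 2 * (n / 2 - 2 * k) + 3 * n / 2 :=
    add_nonneg (mul_nonneg (sq_nonneg _) (by linarith)) (by linarith)
  have hsq : n ^ 2 / 4 - m ^ 2 ≤ (p ^ 2 + 1) / 2 * n :=
    calc n ^ 2 / 4 - m ^ 2 = (n / 2 - m) * (n / 2 + m) := by ring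
      _ ≤ (p ^ 2 + 1) / 2 * n :=
        mul_le_mul (by linarith) (by linarith) (by nlinarith) (by positivity)
  have hp : p ^ 2 ≤ (1 + D) ^ 2 := by gcongr
  calc n ^ 2 / 4 - (m ^ 2 + 2 * k * p ^ 2) ≤ (1 + D) ^ 2 * (n / 2 - 2 * k) + 3 * n / 2 - n := by
        nlinarith [mul_le_mul_of_nonneg_right hp (by linarith : (0:ℝ) ≤ n / 2 - 2 * k)]
    _ ≤ n ^ 3 / (8 * K ^ 2) - n := by
        gcongr
        rw [le_div_iff₀ (by positivity), mul_comm]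
        calc _ ≤ 8 * (k + 1) ^ 2 * ((1 + D) ^ 2 * (n / 2 - 2 * k) + 3 * n / 2) := by gcongr
          _ ≤ n ^ 3 := hD ▸ deficiency_poly_le hk hD0 hDk hD16

theorem exists_graph_of_root {n k p : ℕ} {K D : ℝ} (hk : 41 ≤ k) (hkK : k < K)
    (hKk : K ≤ k + 1) (hnk : n ≤ k ^ 2) (h40 : 40 * K ≤ n) (hD0 : 0 ≤ D)
    (hD : D ^ 2 + 2 * k * D = n)
    (hDp : D ≤ p) (hpD : p < D + 1) :
    ∃ G : SimpleGraph (Fin n), (∀ u v, G.Adj u v → ∃ w, G.Adj u w ∧ G.Adj v w) ∧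
      (n : ℝ) ^ 2 / 4 - n ^ 3 / (8 * K ^ 2) + n ≤ #G.edgeFinset ∧ (bk G : ℝ) < K := by
  have hk41 : (41 : ℝ) ≤ k := by exact_mod_cast hk
  have hnkR : (n : ℝ) ≤ k ^ 2 := by exact_mod_cast hnk
  have hDk : 2 * D ≤ k := by nlinarith
  have hp2 : 2 ≤ p := by
    have : 1 < D := by nlinarith
    exact_mod_cast (show (1 : ℝ) < p by linarith)
  have hpn : 2 * (p : ℝ) ^ 2 ≤ n := by
    have : (p : ℝ) ^ 2 ≤ (D + 1) ^ 2 := pow_le_pow_left₀ (by positivity) hpD.le 2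
    nlinarith [mul_le_mul_of_nonneg_left hDk hD0]
  have hpk : n ≤ p ^ 2 + 2 * (p * k) := by
    have h1 : D ^ 2 ≤ (p : ℝ) ^ 2 := pow_le_pow_left₀ hD0 hDp 2
    have h2 : D * k ≤ (p : ℝ) * k := mul_le_mul_of_nonneg_right hDp (by positivity)
    exact_mod_cast (show (n : ℝ) ≤ p ^ 2 + 2 * (p * k) by linarith)
  have hpnN : p ^ 2 ≤ n := by exact_mod_cast (show (p : ℝ) ^ 2 ≤ n by nlinarith)
  set m := (n - p ^ 2) / 2
  have hm : (n : ℝ) - p ^ 2 - 1 ≤ 2 * m ∧ 2 * m ≤ (n : ℝ) - p ^ 2 := by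
    have h1 : ((n - p ^ 2 : ℕ) : ℝ) ≤ 2 * m + 1 := by
      exact_mod_cast (by omega : n - p ^ 2 ≤ 2 * m + 1)
    have h2 : 2 * (m : ℝ) ≤ (n - p ^ 2 : ℕ) := by
      exact_mod_cast (by omega : 2 * m ≤ n - p ^ 2)
    push_cast [Nat.cast_sub hpnN] at h1 h2
    constructor <;> linarith
  have hkm : k ≤ m := by exact_mod_cast (show (k : ℝ) ≤ m by linarith)
  have hmult : k * (p + 2) ≤ 3 * m := by
    have : (k : ℝ) * p ≤ k * (D + 1) := mul_le_mul_of_nonneg_left hpD.le (by positivity)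
    exact_mod_cast (show (k : ℝ) * (p + 2) ≤ 3 * m by nlinarith)
  obtain ⟨G, htri, hedges, hbk⟩ :=
    exists_graph_of_blocks (n := n) (by omega) hkm hp2 (by omega) (by omega) hmult
  refine ⟨G, htri, ?_, (Nat.cast_le.2 hbk).trans_lt hkK⟩
  have := deficiency_le hk41 hkK.le hKk hnkR (by linarith) hD0 hD
    (by positivity) (by linarith) hm.1 (by linarith [hm.2, sq_nonneg (p : ℝ)])
  have hedges' : ((m ^ 2 + 2 * k * p ^ 2 : ℕ) : ℝ) ≤ #G.edgeFinset := by exact_mod_cast hedges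
  push_cast at hedges'
  linarith

theorem exists_graph_bk_lt {n : ℕ} {K : ℝ} (h42 : 42 ≤ K) (hsqrt : √n + 1 ≤ K)
    (h40 : 40 * K ≤ n) :
    ∃ G : SimpleGraph (Fin n), (∀ u v, G.Adj u v → ∃ w, G.Adj u w ∧ G.Adj v w) ∧
      (n : ℝ) ^ 2 / 4 - n ^ 3 / (8 * K ^ 2) + n ≤ #G.edgeFinset ∧ (bk G : ℝ) < K := by
  have hceil := Nat.ceil_lt_add_one (by linarith : 0 ≤ K)
  have hkR : ((⌈K⌉₊ - 1 : ℕ) : ℝ) = ⌈K⌉₊ - 1 :=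
    by rw [Nat.cast_sub (Nat.one_le_iff_ne_zero.2 (by positivity)), Nat.cast_one]
  set k := ⌈K⌉₊ - 1
  have hkK : (k : ℝ) < K := by linarith
  have hKk : K ≤ k + 1 := by linarith [Nat.le_ceil K]
  have hnk : n ≤ k ^ 2 := by
    have : √n ≤ k := by linarith
    exact_mod_cast (Real.sq_sqrt n.cast_nonneg) ▸ pow_le_pow_left₀ (Real.sqrt_nonneg _) this 2
  set D := √(n + k ^ 2) - k
  have hroot := Real.sq_sqrt (by positivity : (0 : ℝ) ≤ n + k ^ 2)
  have hD0 : 0 ≤ D := sub_nonneg.2 (Real.le_sqrt_of_sq_le (by linarith))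
  have hk : 41 ≤ k := by exact_mod_cast (show (41 : ℝ) ≤ k by linarith)
  exact exists_graph_of_root (p := ⌈D⌉₊) hk hkK hKk hnk h40 hD0 (by linear_combination hroot)
    (Nat.le_ceil D) (Nat.ceil_lt_add_one hD0)

open Filter

theorem eventually_mul_rpow_le_rpow (C : ℝ) {a b : ℝ} (hab : b < a) :
    ∀ᶠ n : ℕ in atTop, C * (n : ℝ) ^ b ≤ (n : ℝ) ^ a := by
  have hlim : Tendsto (fun n : ℕ => (n : ℝ) ^ (a - b)) atTop atTop :=
    (tendsto_rpow_atTop (by linarith)).comp tendsto_natCast_atTop_atTop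
  filter_upwards [hlim.eventually_ge_atTop C, eventually_gt_atTop 0] with n hC hn
  have hn : (0 : ℝ) < n := by exact_mod_cast hn
  calc C * (n : ℝ) ^ b ≤ (n : ℝ) ^ (a - b) * (n : ℝ) ^ b := by gcongr
    _ = (n : ℝ) ^ a := by rw [← Real.rpow_add hn, sub_add_cancel]

theorem eventually_booksize_bounds {c : ℝ} (hc0 : 0 < c) (hc1 : c < 1) :
    ∀ᶠ n : ℕ in atTop, 42 ≤ (n : ℝ) ^ (1 - c / 2) / (2 * √2) ∧
      √n + 1 ≤ (n : ℝ) ^ (1 - c / 2) / (2 * √2) ∧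
      40 * ((n : ℝ) ^ (1 - c / 2) / (2 * √2)) ≤ n := by
  have hs : (0 : ℝ) < 2 * √2 := by positivity
  filter_upwards [eventually_mul_rpow_le_rpow (84 * √2) (by linarith : (0 : ℝ) < 1 - c / 2),
    eventually_mul_rpow_le_rpow (4 * √2) (by linarith : (1 / 2 : ℝ) < 1 - c / 2),
    eventually_mul_rpow_le_rpow (40 / (2 * √2)) (by linarith : 1 - c / 2 < (1 : ℝ)),
    eventually_ge_atTop 1] with n h42 hsqrt h40 hn
  rw [Real.rpow_zero, mul_one] at h42
  rw [Real.rpow_one] at h40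
  rw [← Real.sqrt_eq_rpow] at hsqrt
  have : (1 : ℝ) ≤ √n := Real.one_le_sqrt.2 (by exact_mod_cast hn)
  refine ⟨?_, ?_, ?_⟩
  · rw [le_div_iff₀ hs]; linarith
  · rw [le_div_iff₀ hs]; nlinarith [Real.sqrt_nonneg 2]
  · rw [mul_div_assoc', div_le_iff₀ hs]
    rw [div_mul_eq_mul_div, div_le_iff₀ hs] at h40
    linarith

theorem stmt18 (c : ℝ) (hc0 : 0 < c) (hc1 : c < 1) :
    ∃ N : ℕ, ∀ n : ℕ, N ≤ n →
      ∃ G : SimpleGraph (Fin n),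
        (∀ u v : Fin n, G.Adj u v → ∃ w : Fin n, G.Adj u w ∧ G.Adj v w) ∧
        ((G.edgeFinset.card : ℝ) > (n : ℝ) ^ 2 / 4 - (n : ℝ) ^ c * n) ∧
        ((bk G : ℝ) < (n : ℝ) ^ (1 - c / 2) / (2 * Real.sqrt 2)) := by
  obtain ⟨N, hN⟩ :=
    eventually_atTop.1 ((eventually_booksize_bounds hc0 hc1).and (eventually_gt_atTop 0))
  refine ⟨N, fun n hn => ?_⟩
  obtain ⟨⟨h42, hsqrt, h40⟩, hn0⟩ := hN n hn
  obtain ⟨G, htri, hedges, hbk⟩ := exists_graph_bk_lt h42 hsqrt h40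
  have hn0 : (0 : ℝ) < n := by exact_mod_cast hn0
  have hdeficit : (n : ℝ) ^ 3 / (8 * ((n : ℝ) ^ (1 - c / 2) / (2 * √2)) ^ 2) = n ^ c * n := by
    rw [div_pow, mul_pow, Real.sq_sqrt zero_le_two, ← Real.rpow_mul_natCast hn0.le,
      show (1 - c / 2) * ((2 : ℕ) : ℝ) = 2 - c by push_cast; ring, Real.rpow_sub hn0,
      Real.rpow_two]
    field_simp
    ring
  refine ⟨G, htri, ?_, hbk⟩
  rw [hdeficit] at hedges
  linarith
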